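/- arXiv:1708.09772 — 6 statements merged into one kernel-verified Lean document; each statement's English description precedes it below -/
import Mathlib

section
/- Let n = q² + q + 1 with q a prime power, let D_{2n} be the dihedral group of order 2n, and let Δ be a difference set in Z/nZ. Then the Cayley graph of D_{2n} with respect to {t·r^σ : σ ∈ Δ} is a bipartite (q+1)-regular graph of girth at least 6 on 2(q²+q+1) vertices. -/
open DihedralGroup

/-- A difference set in `ℤ/nℤ`: every nonzero element is uniquely a difference `τ - σ`
of two elements of `Δ`. -/
def IsDifferenceSet {n : ℕ} (Δ : Finset (ZMod n)) : Prop :=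
  ∀ g : ZMod n, g ≠ 0 →
    ∃! στ : ZMod n × ZMod n, στ.1 ∈ Δ ∧ στ.2 ∈ Δ ∧ στ.2 - στ.1 = g

/-- The Cayley graph of the dihedral group `D_{2n}` with respect to the set
`{t·r^σ : σ ∈ Δ}` (here `t = sr 0` is a reflection, so `t·r^σ = sr 0 * r σ`). -/
def dihedralCayleyGraph (n : ℕ) (Δ : Finset (ZMod n)) : SimpleGraph (DihedralGroup n) :=
  SimpleGraph.fromRel (fun g h => ∃ σ ∈ Δ, h = g * (sr 0 * DihedralGroup.r σ))

/-!
Every generator `t·r^σ = sr σ` is a reflection, so each edge joins a rotation to a reflection: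
the graph is bipartite, and `σ ↦ g·sr σ` parametrises the neighbours of `g`. Counting the
`|Δ|(|Δ| - 1)` ordered pairs of distinct elements of `Δ` against the `n - 1` nonzero residues
gives `|Δ| = q + 1`. Cycles have even length, so it remains to exclude 4-cycles: two paths
`a - b - c` and `a - d - c` give `r^(σ₂ - σ₁) = a⁻¹c = r^(σ₄ - σ₃)` with `σ₁ ≠ σ₂`, and
uniqueness of differences forces `σ₁ = σ₃`, i.e. `b = d`.
-/

namespace IsDifferenceSet

variable {n : ℕ} {Δ : Finset (ZMod n)}

theorem eq_of_sub_eq_sub (hΔ : IsDifferenceSet Δ) {a b c d : ZMod n} (ha : a ∈ Δ) (hb : b ∈ Δ)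
    (hc : c ∈ Δ) (hd : d ∈ Δ) (hab : a ≠ b) (h : b - a = d - c) : a = c ∧ b = d := by
  obtain ⟨_, -, huniq⟩ := hΔ (b - a) (sub_ne_zero.2 hab.symm)
  exact Prod.ext_iff.1 <| (huniq (a, b) ⟨ha, hb, rfl⟩).trans (huniq (c, d) ⟨hc, hd, h.symm⟩).symm

theorem card_offDiag [NeZero n] (hΔ : IsDifferenceSet Δ) : Δ.offDiag.card = n - 1 := by
  have hnonzero : (Finset.univ.erase (0 : ZMod n)).card = n - 1 := by simp
  rw [← hnonzero]
  refine Finset.card_bij (fun p _ => p.2 - p.1) ?_ ?_ ?_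
  · intro p hp
    exact Finset.mem_erase.2 ⟨sub_ne_zero.2 (Finset.mem_offDiag.1 hp).2.2.symm, Finset.mem_univ _⟩
  · intro p hp p' hp' h
    obtain ⟨hp1, hp2, hne⟩ := Finset.mem_offDiag.1 hp
    obtain ⟨hp1', hp2', -⟩ := Finset.mem_offDiag.1 hp'
    obtain ⟨h1, h2⟩ := hΔ.eq_of_sub_eq_sub hp1 hp2 hp1' hp2' hne h
    exact Prod.ext h1 h2
  · intro g hg
    obtain ⟨hg0, -⟩ := Finset.mem_erase.1 hg
    obtain ⟨p, ⟨h1, h2, h3⟩, -⟩ := hΔ g hg0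
    refine ⟨p, Finset.mem_offDiag.2 ⟨h1, h2, fun h => hg0 ?_⟩, h3⟩
    rw [← h3, h, sub_self]

theorem card_eq {q : ℕ} (hq : 0 < q) (hn : n = q ^ 2 + q + 1) (hΔ : IsDifferenceSet Δ) :
    Δ.card = q + 1 := by
  have : NeZero n := ⟨by omega⟩
  have hcard : Δ.card * Δ.card - Δ.card = q ^ 2 + q := by
    rw [← Finset.offDiag_card, hΔ.card_offDiag]
    omega
  have hfactor : ((Δ.card : ℤ) - (q + 1)) * (Δ.card + q) = 0 := by
    have hcard' : (Δ.card : ℤ) * Δ.card - Δ.card = q ^ 2 + q := by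
      rw [← Nat.cast_mul, ← Nat.cast_sub (Nat.le_mul_self _), hcard]
      push_cast
      ring
    linear_combination hcard'
  rcases mul_eq_zero.1 hfactor with h | h <;> omega

end IsDifferenceSet

namespace DihedralGroup

variable {n : ℕ}

def isReflection : DihedralGroup n → Bool
  | r _ => false
  | sr _ => true

theorem isReflection_mul_sr (g : DihedralGroup n) (σ : ZMod n) :
    (g * sr σ).isReflection = !g.isReflection := by
  cases g <;> rfl

end DihedralGroup

namespace SimpleGraph

variable {V : Type*} {G : SimpleGraph V}

theorem Walk.IsCycle.length_ne_four
    (hG : ∀ ⦃a b c d⦄, G.Adj a b → G.Adj b c → G.Adj a d → G.Adj d c → a ≠ c → b = d)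
    {v : V} {w : G.Walk v v} (hw : w.IsCycle) : w.length ≠ 4 := by
  intro hlen
  rcases w with _ | @⟨_, a, _, h₁, _ | @⟨_, b, _, h₂, _ | @⟨_, c, _, h₃, _ | ⟨h₄, _ | ⟨_, _⟩⟩⟩⟩⟩ <;>
    simp +arith at hlen
  have hnodup := hw.support_nodup
  simp only [Walk.support_cons, Walk.support_nil, List.tail_cons, List.nodup_cons,
    List.mem_cons] at hnodup
  have hvb : v ≠ b := fun h => hnodup.2.1 (by simp [h])
  exact hnodup.1 (Or.inr (Or.inl (hG h₁ h₂ h₄.symm h₃.symm hvb)))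

theorem six_le_egirth_of_coloring (c : G.Coloring Bool)
    (hG : ∀ ⦃a b c d⦄, G.Adj a b → G.Adj b c → G.Adj a d → G.Adj d c → a ≠ c → b = d) :
    6 ≤ G.egirth := by
  refine le_egirth.2 fun v w hw => ?_
  obtain ⟨k, hk⟩ : Even w.length := (c.even_length_iff_congr w).2 Iff.rfl
  have hne := hw.length_ne_four hG
  have := hw.three_le_length
  exact_mod_cast (by omega : 6 ≤ w.length)

end SimpleGraph

section dihedralCayleyGraph

variable {n : ℕ} {Δ : Finset (ZMod n)}

theorem dihedralCayleyGraph_adj {g h : DihedralGroup n} :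
    (dihedralCayleyGraph n Δ).Adj g h ↔ ∃ σ ∈ Δ, h = g * sr σ := by
  have hgen : ∀ σ : ZMod n, sr 0 * r σ = sr σ := fun σ => by rw [sr_mul_r, zero_add]
  simp only [dihedralCayleyGraph, SimpleGraph.fromRel_adj, hgen]
  constructor
  · rintro ⟨-, ⟨σ, hσ, rfl⟩ | ⟨σ, hσ, rfl⟩⟩
    · exact ⟨σ, hσ, rfl⟩
    · exact ⟨σ, hσ, by rw [mul_assoc, sr_mul_self, mul_one]⟩
  · rintro ⟨σ, hσ, rfl⟩
    refine ⟨fun h => ?_, Or.inl ⟨σ, hσ, rfl⟩⟩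
    have : sr σ = r 0 := by rwa [eq_comm, mul_eq_left, one_def] at h
    cases this

theorem card_neighborSet_dihedralCayleyGraph (g : DihedralGroup n) :
    Nat.card ((dihedralCayleyGraph n Δ).neighborSet g) = Δ.card := by
  have hset : (dihedralCayleyGraph n Δ).neighborSet g = (fun σ => g * sr σ) '' Δ := by
    ext h
    simp only [SimpleGraph.mem_neighborSet, dihedralCayleyGraph_adj, Set.mem_image,
      Finset.mem_coe, eq_comm]
  have hinj : Function.Injective fun σ : ZMod n => g * sr σ :=
    fun _ _ h => sr.inj (mul_left_cancel h)
  rw [hset, Nat.card_coe_set_eq, Set.ncard_image_of_injective _ hinj, Set.ncard_coe_finset]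

variable (n Δ) in
def dihedralCayleyGraph.reflectionColoring : (dihedralCayleyGraph n Δ).Coloring Bool :=
  SimpleGraph.Coloring.mk isReflection fun hadj => by
    obtain ⟨σ, -, rfl⟩ := dihedralCayleyGraph_adj.1 hadj
    rw [isReflection_mul_sr]
    exact Bool.not_ne_self _ |>.symm

theorem dihedralCayleyGraph_eq_of_adj_of_adj (hΔ : IsDifferenceSet Δ) ⦃a b c d : DihedralGroup n⦄
    (hab : (dihedralCayleyGraph n Δ).Adj a b) (hbc : (dihedralCayleyGraph n Δ).Adj b c)
    (had : (dihedralCayleyGraph n Δ).Adj a d) (hdc : (dihedralCayleyGraph n Δ).Adj d c)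
    (hac : a ≠ c) : b = d := by
  obtain ⟨σ₁, hσ₁, rfl⟩ := dihedralCayleyGraph_adj.1 hab
  obtain ⟨σ₂, hσ₂, rfl⟩ := dihedralCayleyGraph_adj.1 hbc
  obtain ⟨σ₃, hσ₃, rfl⟩ := dihedralCayleyGraph_adj.1 had
  obtain ⟨σ₄, hσ₄, hc⟩ := dihedralCayleyGraph_adj.1 hdc
  have hσ₁₂ : σ₁ ≠ σ₂ := by
    rintro rfl
    exact hac (by rw [mul_assoc, sr_mul_self, mul_one])
  have hsub : σ₂ - σ₁ = σ₄ - σ₃ := by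
    simpa only [mul_assoc, mul_left_cancel_iff, sr_mul_sr, r.injEq] using hc
  rw [(hΔ.eq_of_sub_eq_sub hσ₁ hσ₂ hσ₃ hσ₄ hσ₁₂ hsub).1]

end dihedralCayleyGraph

/-- Let `n = q² + q + 1` with `q` a prime power and `Δ` a difference set in `ℤ/nℤ`.
Then the Cayley graph of `D_{2n}` with respect to `{t·r^σ : σ ∈ Δ}` is a bipartite
`(q+1)`-regular graph of girth at least 6 on `2(q²+q+1)` vertices. -/
theorem dihedralCayleyGraph_incidence_graph (q n : ℕ)
    (hq : ∃ p k : ℕ, p.Prime ∧ 0 < k ∧ q = p ^ k) (hn : n = q ^ 2 + q + 1)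
    (Δ : Finset (ZMod n)) (hΔ : IsDifferenceSet Δ) :
    (dihedralCayleyGraph n Δ).Colorable 2 ∧
    (∀ g : DihedralGroup n, Nat.card ((dihedralCayleyGraph n Δ).neighborSet g) = q + 1) ∧
    6 ≤ (dihedralCayleyGraph n Δ).egirth ∧
    Nat.card (DihedralGroup n) = 2 * (q ^ 2 + q + 1) := by
  have hq0 : 0 < q := by
    obtain ⟨p, k, hp, -, rfl⟩ := hq
    exact pow_pos hp.pos k
  refine ⟨?_, fun g => ?_, ?_, by rw [nat_card, hn]⟩
  · simpa using (dihedralCayleyGraph.reflectionColoring n Δ).colorable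
  · rw [card_neighborSet_dihedralCayleyGraph, hΔ.card_eq hq0 hn]
  · exact SimpleGraph.six_le_egirth_of_coloring (dihedralCayleyGraph.reflectionColoring n Δ)
      (dihedralCayleyGraph_eq_of_adj_of_adj hΔ)
end

section
/- Let G be a group and {P_i : i ∈ I} a collection of subgroups such that P_i P_j ∩ P_k = {1} for all pairwise distinct i, j, k ∈ I, and P_i ∩ P_j = {1} for distinct i, j. Then the coset graph of G with respect to {P_i} has girth at least 8. -/
/-!
The coset graph is bipartite, so a cycle of length less than 8 has length 4 or 6 and can be
rotated to start at a group element. A 4-cycle `g₁ — s₁ — g₂ — s₂ — g₁` puts `g₁⁻¹ g₂` in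
`Pᵢ ∩ Pⱼ`, where `s₁, s₂` are cosets of `Pᵢ, Pⱼ` with `i ≠ j`; so `g₁ = g₂`. A 6-cycle through
`g₁, g₂, g₃` and cosets of `Pᵢ, Pⱼ, P_k` with `i, j, k` pairwise distinct writes
`g₁⁻¹ g₃ = (g₁⁻¹ g₂)(g₂⁻¹ g₃)` as an element of `Pᵢ Pⱼ ∩ P_k`; so `g₁ = g₃`.
-/

open scoped Pointwise

/-- The coset graph of a group `G` with respect to a family of subgroups `P i`:
the bipartite graph on `G ⊔ (⋃ i, G/Pᵢ)` where `g ∈ G` is adjacent to the coset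
`hPᵢ` iff `g ∈ hPᵢ` (i.e. the class of `g` in `G ⧸ P i` is that coset). -/
def cosetGraph {G : Type*} [Group G] {I : Type*} (P : I → Subgroup G) :
    SimpleGraph (G ⊕ (Σ i : I, G ⧸ P i)) :=
  SimpleGraph.fromRel (fun v w =>
    ∃ (g : G) (i : I), v = Sum.inl g ∧ w = Sum.inr ⟨i, (g : G ⧸ P i)⟩)

lemma SimpleGraph.Walk.IsCycle.getVert_ne_getVert {V : Type*} {G : SimpleGraph V} {u : V}
    {c : G.Walk u u} (hc : c.IsCycle) {i j : ℕ} (hi : i < c.length) (hj : j < c.length)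
    (hij : i ≠ j) : c.getVert i ≠ c.getVert j :=
  fun h => hij <| hc.getVert_injOn' (by simp only [Set.mem_ofPred_eq]; omega)
    (by simp only [Set.mem_ofPred_eq]; omega) h

namespace cosetGraph

open SimpleGraph Sum

variable {G : Type*} [Group G] {I : Type*} {P : I → Subgroup G}

lemma sigma_eq_of_fst_eq {g : G} {s t : Σ i, G ⧸ P i} (hs : (g : G ⧸ P s.1) = s.2)
    (ht : (g : G ⧸ P t.1) = t.2) (h : s.1 = t.1) : s = t := by
  obtain ⟨i, c⟩ := s
  obtain ⟨j, d⟩ := t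
  obtain rfl : i = j := h
  obtain rfl : c = d := hs.symm.trans ht
  rfl

lemma eq_of_mem_two_cosets (h2 : ∀ i j : I, i ≠ j → P i ⊓ P j = ⊥) {g h : G}
    {s t : Σ i, G ⧸ P i} (hst : s ≠ t) (hgs : (g : G ⧸ P s.1) = s.2)
    (hhs : (h : G ⧸ P s.1) = s.2) (hgt : (g : G ⧸ P t.1) = t.2)
    (hht : (h : G ⧸ P t.1) = t.2) : g = h := by
  have hij : s.1 ≠ t.1 := fun hij => hst (sigma_eq_of_fst_eq hgs hgt hij)
  have hmem : g⁻¹ * h ∈ P s.1 ⊓ P t.1 :=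
    ⟨QuotientGroup.eq.mp (hgs.trans hhs.symm), QuotientGroup.eq.mp (hgt.trans hht.symm)⟩
  rwa [h2 _ _ hij, Subgroup.mem_bot, inv_mul_eq_one] at hmem

lemma eq_of_coset_triangle
    (h3 : ∀ i j k : I, i ≠ j → j ≠ k → i ≠ k →
      ∀ g : G, g ∈ (P i : Set G) * (P j : Set G) → g ∈ P k → g = 1)
    {g₁ g₂ g₃ : G} {s₁ s₂ s₃ : Σ i, G ⧸ P i}
    (hs₁₂ : s₁ ≠ s₂) (hs₂₃ : s₂ ≠ s₃) (hs₁₃ : s₁ ≠ s₃)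
    (hg₁s₁ : (g₁ : G ⧸ P s₁.1) = s₁.2) (hg₂s₁ : (g₂ : G ⧸ P s₁.1) = s₁.2)
    (hg₂s₂ : (g₂ : G ⧸ P s₂.1) = s₂.2) (hg₃s₂ : (g₃ : G ⧸ P s₂.1) = s₂.2)
    (hg₃s₃ : (g₃ : G ⧸ P s₃.1) = s₃.2) (hg₁s₃ : (g₁ : G ⧸ P s₃.1) = s₃.2) : g₁ = g₃ := by
  have hij : s₁.1 ≠ s₂.1 := fun h => hs₁₂ (sigma_eq_of_fst_eq hg₂s₁ hg₂s₂ h)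
  have hjk : s₂.1 ≠ s₃.1 := fun h => hs₂₃ (sigma_eq_of_fst_eq hg₃s₂ hg₃s₃ h)
  have hik : s₁.1 ≠ s₃.1 := fun h => hs₁₃ (sigma_eq_of_fst_eq hg₁s₁ hg₁s₃ h)
  have hprod : g₁⁻¹ * g₃ ∈ (P s₁.1 : Set G) * (P s₂.1 : Set G) :=
    ⟨g₁⁻¹ * g₂, QuotientGroup.eq.mp (hg₁s₁.trans hg₂s₁.symm),
      g₂⁻¹ * g₃, QuotientGroup.eq.mp (hg₂s₂.trans hg₃s₂.symm), by group⟩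
  have hk : g₁⁻¹ * g₃ ∈ P s₃.1 := QuotientGroup.eq.mp (hg₁s₃.trans hg₃s₃.symm)
  exact inv_mul_eq_one.mp (h3 _ _ _ hij hjk hik _ hprod hk)

@[simp]
lemma adj_inl_inr {g : G} {s : Σ i, G ⧸ P i} :
    (cosetGraph P).Adj (inl g) (inr s) ↔ (g : G ⧸ P s.1) = s.2 := by
  obtain ⟨i, c⟩ := s
  simp [cosetGraph, eq_comm]

@[simp]
lemma not_adj_inl_inl {g h : G} : ¬ (cosetGraph P).Adj (inl g) (inl h) := by
  simp [cosetGraph]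

@[simp]
lemma not_adj_inr_inr {s t : Σ i, G ⧸ P i} : ¬ (cosetGraph P).Adj (inr s) (inr t) := by
  simp [cosetGraph]

lemma exists_inr_of_adj_inl {g : G} {v : G ⊕ (Σ i, G ⧸ P i)}
    (h : (cosetGraph P).Adj (inl g) v) :
    ∃ s : Σ i, G ⧸ P i, v = inr s ∧ (g : G ⧸ P s.1) = s.2 := by
  cases v with
  | inl => simp at h
  | inr s => exact ⟨s, rfl, adj_inl_inr.mp h⟩

lemma exists_inl_of_adj_inr {s : Σ i, G ⧸ P i} {v : G ⊕ (Σ i, G ⧸ P i)}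
    (h : (cosetGraph P).Adj (inr s) v) : ∃ g : G, v = inl g ∧ (g : G ⧸ P s.1) = s.2 := by
  cases v with
  | inl g => exact ⟨g, rfl, adj_inl_inr.mp h.symm⟩
  | inr => simp at h

def isLeftColoring : (cosetGraph P).Coloring Bool :=
  Coloring.mk Sum.isLeft fun {v w} h => by
    cases v <;> cases w <;> simp_all

lemma even_length {v : G ⊕ (Σ i, G ⧸ P i)} (c : (cosetGraph P).Walk v v) : Even c.length :=
  (isLeftColoring.even_length_iff_congr c).mpr Iff.rfl

lemma exists_getVert_add_one_add_two {u v : G ⊕ (Σ i, G ⧸ P i)} (c : (cosetGraph P).Walk u v)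
    {k : ℕ} (hk : k + 2 ≤ c.length) {g : G} (hg : c.getVert k = inl g) :
    ∃ (s : Σ i, G ⧸ P i) (h : G), c.getVert (k + 1) = inr s ∧ c.getVert (k + 2) = inl h ∧
      (g : G ⧸ P s.1) = s.2 ∧ (h : G ⧸ P s.1) = s.2 := by
  have hadj₀ := c.adj_getVert_succ (i := k) (by omega)
  rw [hg] at hadj₀
  obtain ⟨s, hs, hgs⟩ := exists_inr_of_adj_inl hadj₀
  have hadj₁ := c.adj_getVert_succ (i := k + 1) (by omega)
  rw [hs] at hadj₁
  obtain ⟨h, hh, hhs⟩ := exists_inl_of_adj_inr hadj₁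
  exact ⟨s, h, hs, hh, hgs, hhs⟩

lemma exists_isCycle_inl {v : G ⊕ (Σ i, G ⧸ P i)} {c : (cosetGraph P).Walk v v}
    (hc : c.IsCycle) :
    ∃ (g : G) (c' : (cosetGraph P).Walk (inl g) (inl g)), c'.IsCycle ∧ c'.length = c.length := by
  classical
  cases v with
  | inl g => exact ⟨g, c, hc, rfl⟩
  | inr s =>
    obtain ⟨g, hg, -⟩ := exists_inl_of_adj_inr (c.adj_snd hc.not_nil)
    have hmem : inl g ∈ c.support := hg ▸ c.getVert_mem_support 1
    exact ⟨g, c.rotate _ hmem, hc.rotate hmem, c.length_rotate _ hmem⟩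

lemma length_ne_four (h2 : ∀ i j : I, i ≠ j → P i ⊓ P j = ⊥) {g : G}
    {c : (cosetGraph P).Walk (inl g) (inl g)} (hc : c.IsCycle) : c.length ≠ 4 := by
  intro hlen
  obtain ⟨s₁, g₂, hv₁, hv₂, hgs₁, hg₂s₁⟩ :=
    exists_getVert_add_one_add_two c (k := 0) (by omega) c.getVert_zero
  obtain ⟨s₂, g', hv₃, hv₄, hg₂s₂, hgs₂⟩ :=
    exists_getVert_add_one_add_two c (k := 2) (by omega) hv₂
  obtain rfl : g = g' := by
    rw [show 2 + 2 = c.length by omega, c.getVert_length] at hv₄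
    exact inl_injective hv₄
  have hs₁₂ : s₁ ≠ s₂ := ne_of_apply_ne inr <| hv₁ ▸ hv₃ ▸
    hc.getVert_ne_getVert (by omega) (by omega) (by decide : 1 ≠ 3)
  have hgg₂ : g = g₂ := eq_of_mem_two_cosets h2 hs₁₂ hgs₁ hg₂s₁ hgs₂ hg₂s₂
  exact hc.getVert_ne_getVert (i := 0) (j := 2) (by omega) (by omega) (by decide)
    (by rw [c.getVert_zero, hv₂, hgg₂])

lemma length_ne_six
    (h3 : ∀ i j k : I, i ≠ j → j ≠ k → i ≠ k →
      ∀ g : G, g ∈ (P i : Set G) * (P j : Set G) → g ∈ P k → g = 1) {g : G}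
    {c : (cosetGraph P).Walk (inl g) (inl g)} (hc : c.IsCycle) : c.length ≠ 6 := by
  intro hlen
  obtain ⟨s₁, g₂, hv₁, hv₂, hgs₁, hg₂s₁⟩ :=
    exists_getVert_add_one_add_two c (k := 0) (by omega) c.getVert_zero
  obtain ⟨s₂, g₃, hv₃, hv₄, hg₂s₂, hg₃s₂⟩ :=
    exists_getVert_add_one_add_two c (k := 2) (by omega) hv₂
  obtain ⟨s₃, g', hv₅, hv₆, hg₃s₃, hgs₃⟩ :=
    exists_getVert_add_one_add_two c (k := 4) (by omega) hv₄
  obtain rfl : g = g' := by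
    rw [show 4 + 2 = c.length by omega, c.getVert_length] at hv₆
    exact inl_injective hv₆
  have hs₁₂ : s₁ ≠ s₂ := ne_of_apply_ne inr <| hv₁ ▸ hv₃ ▸
    hc.getVert_ne_getVert (by omega) (by omega) (by decide : 1 ≠ 3)
  have hs₂₃ : s₂ ≠ s₃ := ne_of_apply_ne inr <| hv₃ ▸ hv₅ ▸
    hc.getVert_ne_getVert (by omega) (by omega) (by decide : 3 ≠ 5)
  have hs₁₃ : s₁ ≠ s₃ := ne_of_apply_ne inr <| hv₁ ▸ hv₅ ▸
    hc.getVert_ne_getVert (by omega) (by omega) (by decide : 1 ≠ 5)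
  have hgg₃ : g = g₃ := eq_of_coset_triangle h3 hs₁₂ hs₂₃ hs₁₃
    hgs₁ hg₂s₁ hg₂s₂ hg₃s₂ hg₃s₃ hgs₃
  exact hc.getVert_ne_getVert (i := 0) (j := 4) (by omega) (by omega) (by decide)
    (by rw [c.getVert_zero, hv₄, hgg₃])

end cosetGraph

/-- If `Pᵢ Pⱼ ∩ P_k = {1}` for all pairwise distinct `i, j, k`, and `Pᵢ ∩ Pⱼ = {1}` for
distinct `i, j`, then the coset graph of `G` with respect to `{Pᵢ}` has girth at least 8. -/
theorem cosetGraph_girth_ge_eight {G : Type*} [Group G] {I : Type*} (P : I → Subgroup G)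
    (h2 : ∀ i j : I, i ≠ j → P i ⊓ P j = ⊥)
    (h3 : ∀ i j k : I, i ≠ j → j ≠ k → i ≠ k →
      ∀ g : G, g ∈ (P i : Set G) * (P j : Set G) → g ∈ P k → g = 1) :
    8 ≤ (cosetGraph P).egirth := by
  refine SimpleGraph.le_egirth.mpr fun v c hc => ?_
  obtain ⟨g, c', hc', hlen⟩ := cosetGraph.exists_isCycle_inl hc
  obtain ⟨n, hn⟩ := cosetGraph.even_length c'
  have h4 := cosetGraph.length_ne_four h2 hc'
  have h6 := cosetGraph.length_ne_six h3 hc'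
  have h3le := hc'.three_le_length
  rw [← hlen]
  exact_mod_cast (by omega : 8 ≤ c'.length)
end

section
/- Let p be an odd prime and H = H(F_p) the Heisenberg group over F_p with generators x, y and z = [x,y]. Let P₁ = ⟨x⟩, P₂ = ⟨z⟩, and Q_a = ⟨x^a y z^{-a/2}⟩ for a ∈ F_p. Then for any three pairwise distinct subgroups P, P', P'' from this collection of p+2 subgroups, one has PP' ∩ P'' = {1}. -/
/-- The Heisenberg group over `ℤ/pℤ` (upper unitriangular 3×3 matrices over `𝔽_p`),
recorded by the three strictly-upper-triangular entries. -/
@[ext]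
structure Heisenberg (p : ℕ) where
  a : ZMod p
  b : ZMod p
  c : ZMod p

namespace Heisenberg

variable {p : ℕ}

instance : Mul (Heisenberg p) :=
  ⟨fun g h => ⟨g.a + h.a, g.b + h.b, g.c + h.c + g.a * h.b⟩⟩

instance : One (Heisenberg p) := ⟨⟨0, 0, 0⟩⟩

instance : Inv (Heisenberg p) :=
  ⟨fun g => ⟨-g.a, -g.b, g.a * g.b - g.c⟩⟩

@[simp] lemma mul_a (g h : Heisenberg p) : (g * h).a = g.a + h.a := rfl
@[simp] lemma mul_b (g h : Heisenberg p) : (g * h).b = g.b + h.b := rfl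
@[simp] lemma mul_c (g h : Heisenberg p) : (g * h).c = g.c + h.c + g.a * h.b := rfl
@[simp] lemma one_a : (1 : Heisenberg p).a = 0 := rfl
@[simp] lemma one_b : (1 : Heisenberg p).b = 0 := rfl
@[simp] lemma one_c : (1 : Heisenberg p).c = 0 := rfl
@[simp] lemma inv_a (g : Heisenberg p) : g⁻¹.a = -g.a := rfl
@[simp] lemma inv_b (g : Heisenberg p) : g⁻¹.b = -g.b := rfl
@[simp] lemma inv_c (g : Heisenberg p) : g⁻¹.c = g.a * g.b - g.c := rfl

instance : Group (Heisenberg p) where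
  mul_assoc g h k := by ext <;> simp <;> ring
  one_mul g := by ext <;> simp
  mul_one g := by ext <;> simp
  inv_mul_cancel g := by ext <;> simp

/-- The generator `x` (the elementary matrix `E₁₂(1)`). -/
def x : Heisenberg p := ⟨1, 0, 0⟩

/-- The generator `y` (the elementary matrix `E₂₃(1)`). -/
def y : Heisenberg p := ⟨0, 1, 0⟩

/-- The central element `z = [x, y]` (the elementary matrix `E₁₃(1)`). -/
def z : Heisenberg p := ⟨0, 0, 1⟩

open scoped commutatorElement in
lemma z_eq_commutator : (z : Heisenberg p) = ⁅(x : Heisenberg p), y⁆ := by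
  ext <;> simp [x, y, z, commutatorElement_def]

/-- The element `x^a · y · z^{-a/2}`, for `a ∈ 𝔽_p` (powers with exponents in `𝔽_p`
are computed via natural representatives, which is legitimate since `x` and `z`
have order dividing `p`). -/
def w (a : ZMod p) : Heisenberg p :=
  x ^ a.val * y * z ^ (-(a * (2 : ZMod p)⁻¹)).val

/-- The collection of `p + 2` cyclic subgroups `⟨x⟩`, `⟨z⟩`, and
`⟨x^a y z^{-a/2}⟩` for `a ∈ 𝔽_p`, indexed by `Fin 2 ⊕ ZMod p`. -/
def P (p : ℕ) : Fin 2 ⊕ ZMod p → Subgroup (Heisenberg p)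
  | Sum.inl 0 => Subgroup.zpowers x
  | Sum.inl 1 => Subgroup.zpowers z
  | Sum.inr a => Subgroup.zpowers (w a)

end Heisenberg

/-!
Write `g ∈ H(𝔽_p)` as `(v, s)` with `v = (a, b) ∈ 𝔽_p²` and `s = 2c - ab` (`height`); then
`(v, s)(v', s') = (v + v', s + s' + cross v v')`, `cross` being the 2×2 determinant. The subgroup
`⟨z⟩` is `{v = 0}`, while `⟨x⟩` and the `⟨x^a y z^{-a/2}⟩` are the `p + 1` lines of `𝔽_p²`
lifted into `{s = 0}`, so any two of them have independent directions. If `u, v, uv` lie on three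
such lines, comparing heights gives `cross u v = 0`, so `u` or `v` has zero projection. Each case
then ends, like every case involving `⟨z⟩`, with two elements of independent lines whose product
has zero projection, which forces both to be trivial.
-/

def cross {R : Type*} [CommRing R] (u v : R × R) : R := u.1 * v.2 - u.2 * v.1

lemma linearIndependent_pair_of_cross_ne_zero {K : Type*} [Field K] {u v : K × K}
    (h : cross u v ≠ 0) : LinearIndependent K ![u, v] := by
  refine LinearIndependent.pair_iff.mpr fun s t hst => ?_
  have h₁ : s * u.1 + t * v.1 = 0 := by simpa using congrArg Prod.fst hst
  have h₂ : s * u.2 + t * v.2 = 0 := by simpa using congrArg Prod.snd hst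
  unfold cross at h
  refine ⟨(mul_eq_zero.mp ?_).resolve_right h, (mul_eq_zero.mp ?_).resolve_right h⟩
  · linear_combination v.2 * h₁ - v.1 * h₂
  · linear_combination u.1 * h₂ - u.2 * h₁

namespace Heisenberg

variable {p : ℕ}

def proj (g : Heisenberg p) : ZMod p × ZMod p := (g.a, g.b)

def height (g : Heisenberg p) : ZMod p := 2 * g.c - g.a * g.b

@[simp] lemma proj_one : proj (1 : Heisenberg p) = 0 := rfl

@[simp] lemma height_one : height (1 : Heisenberg p) = 0 := by simp [height]

@[simp] lemma proj_mul (g h : Heisenberg p) : proj (g * h) = proj g + proj h := rfl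

lemma height_mul (g h : Heisenberg p) :
    height (g * h) = height g + height h + cross (proj g) (proj h) := by
  simp only [height, cross, proj, mul_a, mul_b, mul_c]; ring

lemma proj_pow (g : Heisenberg p) (n : ℕ) : proj (g ^ n) = n • proj g := by
  induction n with
  | zero => simp
  | succ n ih => rw [pow_succ, proj_mul, ih, succ_nsmul]

lemma height_pow (g : Heisenberg p) (n : ℕ) : height (g ^ n) = n * height g := by
  induction n with
  | zero => simp
  | succ n ih =>
    rw [pow_succ, height_mul, ih, proj_pow]
    simp only [cross, Prod.smul_fst, Prod.smul_snd]
    simp only [nsmul_eq_mul]; push_cast; ring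

instance [NeZero p] : Finite (Heisenberg p) :=
  Finite.of_injective (fun g : Heisenberg p => (g.a, g.b, g.c)) fun g h hgh => by
    simp only [Prod.mk.injEq] at hgh
    ext <;> simp [hgh]

@[simp] lemma proj_x : proj (x : Heisenberg p) = (1, 0) := rfl
@[simp] lemma proj_y : proj (y : Heisenberg p) = (0, 1) := rfl
@[simp] lemma proj_z : proj (z : Heisenberg p) = 0 := rfl
@[simp] lemma height_x : height (x : Heisenberg p) = 0 := by simp [height, x]
@[simp] lemma height_y : height (y : Heisenberg p) = 0 := by simp [height, y]
@[simp] lemma height_z : height (z : Heisenberg p) = 2 := by simp [height, z]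

def gen : Fin 2 ⊕ ZMod p → Heisenberg p
  | Sum.inl 0 => x
  | Sum.inl 1 => z
  | Sum.inr a => w a

lemma P_eq_zpowers_gen (i : Fin 2 ⊕ ZMod p) : P p i = Subgroup.zpowers (gen i) := by
  rcases i with i | a
  · fin_cases i <;> rfl
  · rfl

variable [Fact p.Prime]

lemma ext_proj_height (h2 : (2 : ZMod p) ≠ 0) {g h : Heisenberg p} (hp : proj g = proj h)
    (hh : height g = height h) : g = h := by
  simp only [proj, Prod.mk.injEq] at hp
  simp only [height, hp.1, hp.2, sub_left_inj] at hh
  ext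
  exacts [hp.1, hp.2, mul_left_cancel₀ h2 hh]

lemma mem_zpowers_iff (h2 : (2 : ZMod p) ≠ 0) {g h : Heisenberg p} :
    g ∈ Subgroup.zpowers h ↔ ∃ t : ZMod p, proj g = t • proj h ∧ height g = t * height h := by
  rw [← mem_powers_iff_mem_zpowers, Submonoid.mem_powers_iff]
  constructor
  · rintro ⟨n, rfl⟩
    exact ⟨n, by rw [proj_pow, Nat.cast_smul_eq_nsmul], height_pow h n⟩
  · rintro ⟨t, hpt, hht⟩
    refine ⟨t.val, ext_proj_height h2 ?_ ?_⟩
    · rw [proj_pow, ← Nat.cast_smul_eq_nsmul (ZMod p), ZMod.natCast_zmod_val, hpt]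
    · rw [height_pow, ZMod.natCast_zmod_val, hht]

lemma proj_eq_zero_of_mem_zpowers (h2 : (2 : ZMod p) ≠ 0) {g h : Heisenberg p}
    (hh : proj h = 0) (hg : g ∈ Subgroup.zpowers h) : proj g = 0 := by
  obtain ⟨t, hpt, -⟩ := (mem_zpowers_iff h2).mp hg
  rw [hpt, hh, smul_zero]

lemma eq_one_of_proj_mul_eq_zero (h2 : (2 : ZMod p) ≠ 0) {h₁ h₂ u v : Heisenberg p}
    (hd : cross (proj h₁) (proj h₂) ≠ 0) (hu : u ∈ Subgroup.zpowers h₁)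
    (hv : v ∈ Subgroup.zpowers h₂) (huv : proj (u * v) = 0) : u = 1 ∧ v = 1 := by
  obtain ⟨s, hsu, hhu⟩ := (mem_zpowers_iff h2).mp hu
  obtain ⟨t, htv, hhv⟩ := (mem_zpowers_iff h2).mp hv
  have hst : s • proj h₁ + t • proj h₂ = 0 := by rw [← hsu, ← htv, ← proj_mul, huv]
  have hli : LinearIndependent (ZMod p) ![proj h₁, proj h₂] :=
    linearIndependent_pair_of_cross_ne_zero hd
  obtain ⟨rfl, rfl⟩ := LinearIndependent.pair_iff.mp hli s t hst
  exact ⟨ext_proj_height h2 (by simp [hsu]) (by simp [hhu]),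
    ext_proj_height h2 (by simp [htv]) (by simp [hhv])⟩

lemma mul_eq_one_of_proj_left_eq_zero (h2 : (2 : ZMod p) ≠ 0) {h₂ h₃ u v : Heisenberg p}
    (hd : cross (proj h₃) (proj h₂) ≠ 0) (hv : v ∈ Subgroup.zpowers h₂)
    (huv : u * v ∈ Subgroup.zpowers h₃) (hu : proj u = 0) : u * v = 1 :=
  (eq_one_of_proj_mul_eq_zero h2 hd huv (inv_mem hv) (by simpa using hu)).1

lemma mul_eq_one_of_proj_right_eq_zero (h2 : (2 : ZMod p) ≠ 0) {h₁ h₃ u v : Heisenberg p}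
    (hd : cross (proj h₁) (proj h₃) ≠ 0) (hu : u ∈ Subgroup.zpowers h₁)
    (huv : u * v ∈ Subgroup.zpowers h₃) (hv : proj v = 0) : u * v = 1 :=
  (eq_one_of_proj_mul_eq_zero h2 hd (inv_mem hu) huv (by simpa using hv)).2

lemma mul_eq_one_of_height_eq_zero (h2 : (2 : ZMod p) ≠ 0) {h₁ h₂ h₃ u v : Heisenberg p}
    (hd₁₂ : cross (proj h₁) (proj h₂) ≠ 0) (hd₁₃ : cross (proj h₁) (proj h₃) ≠ 0)
    (hd₃₂ : cross (proj h₃) (proj h₂) ≠ 0) (hh₁ : height h₁ = 0) (hh₂ : height h₂ = 0)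
    (hh₃ : height h₃ = 0) (hu : u ∈ Subgroup.zpowers h₁) (hv : v ∈ Subgroup.zpowers h₂)
    (huv : u * v ∈ Subgroup.zpowers h₃) : u * v = 1 := by
  obtain ⟨s, hsu, hhu⟩ := (mem_zpowers_iff h2).mp hu
  obtain ⟨t, htv, hhv⟩ := (mem_zpowers_iff h2).mp hv
  obtain ⟨_, -, hhuv⟩ := (mem_zpowers_iff h2).mp huv
  have hst : s * t * cross (proj h₁) (proj h₂) = 0 := by
    rw [height_mul, hsu, htv, hhu, hhv, hh₁, hh₂, hh₃] at hhuv
    simp only [cross, Prod.smul_fst, Prod.smul_snd, smul_eq_mul] at hhuv ⊢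
    linear_combination hhuv
  rcases mul_eq_zero.mp ((mul_eq_zero.mp hst).resolve_right hd₁₂) with rfl | rfl
  · exact mul_eq_one_of_proj_left_eq_zero h2 hd₃₂ hv huv (by simp [hsu])
  · exact mul_eq_one_of_proj_right_eq_zero h2 hd₁₃ hu huv (by simp [htv])

lemma proj_w (a : ZMod p) : proj (w a) = (a, 1) := by
  simp [w, proj_pow]

lemma height_w (h2 : (2 : ZMod p) ≠ 0) (a : ZMod p) : height (w a) = 0 := by
  simp [w, height_mul, height_pow, proj_pow, cross, inv_mul_cancel_right₀ h2]

lemma height_gen (h2 : (2 : ZMod p) ≠ 0) {i : Fin 2 ⊕ ZMod p} (hi : i ≠ Sum.inl 1) :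
    height (gen i) = 0 := by
  rcases i with i | a
  · fin_cases i
    · exact height_x
    · exact absurd rfl hi
  · exact height_w h2 a

lemma cross_proj_gen_ne_zero {i j : Fin 2 ⊕ ZMod p} (hij : i ≠ j) (hi : i ≠ Sum.inl 1)
    (hj : j ≠ Sum.inl 1) : cross (proj (gen i)) (proj (gen j)) ≠ 0 := by
  rcases i with i | a <;> rcases j with j | b <;> (try fin_cases i) <;> (try fin_cases j) <;>
    simp_all [gen, proj_w, cross, sub_eq_zero]

end Heisenberg

open Heisenberg

open scoped Pointwise in
/-- For `p` an odd prime and any three pairwise distinct subgroups `P, P', P''` among the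
`p + 2` subgroups `⟨x⟩`, `⟨z⟩`, `⟨x^a y z^{-a/2}⟩` (`a ∈ 𝔽_p`) of the Heisenberg group,
one has `P P' ∩ P'' = {1}`. -/
theorem heisenberg_product_condition (p : ℕ) (hp : p.Prime) (hodd : Odd p) :
    ∀ i j k : Fin 2 ⊕ ZMod p, i ≠ j → j ≠ k → i ≠ k →
      ∀ g : Heisenberg p, g ∈ (P p i : Set (Heisenberg p)) * (P p j : Set (Heisenberg p)) →
        g ∈ P p k → g = 1 := by
  have : Fact p.Prime := ⟨hp⟩
  have h2 : (2 : ZMod p) ≠ 0 := Ring.two_ne_zero <| by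
    rw [ZMod.ringChar_zmod_n]; rintro rfl; exact Nat.not_odd_iff_even.mpr even_two hodd
  rintro i j k hij hjk hik _ ⟨u, hu, v, hv, rfl⟩ huv
  simp only [SetLike.mem_coe, P_eq_zpowers_gen] at hu hv huv
  by_cases hk : k = Sum.inl 1
  · subst hk
    obtain ⟨rfl, rfl⟩ := eq_one_of_proj_mul_eq_zero h2 (cross_proj_gen_ne_zero hij hik hjk) hu hv
      (proj_eq_zero_of_mem_zpowers h2 rfl huv)
    exact one_mul 1
  by_cases hi : i = Sum.inl 1
  · subst hi
    exact mul_eq_one_of_proj_left_eq_zero h2 (cross_proj_gen_ne_zero hjk.symm hk hij.symm) hv huv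
      (proj_eq_zero_of_mem_zpowers h2 rfl hu)
  by_cases hj : j = Sum.inl 1
  · subst hj
    exact mul_eq_one_of_proj_right_eq_zero h2 (cross_proj_gen_ne_zero hik hi hk) hu huv
      (proj_eq_zero_of_mem_zpowers h2 rfl hv)
  exact mul_eq_one_of_height_eq_zero h2 (cross_proj_gen_ne_zero hij hi hj)
    (cross_proj_gen_ne_zero hik hi hk) (cross_proj_gen_ne_zero hjk.symm hk hj)
    (height_gen h2 hi) (height_gen h2 hj) (height_gen h2 hk) hu hv huv
end

section
/- For all real p ≥ 6, setting λ_P = 1 - √(p+1)/(p+2) and λ_Q = 1 - √(2/(p+2)), one has (λ_P + λ_Q - 1)² + 2(λ_P + λ_Q - 1)(2λ_Q - 1) > 0. -/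
/-!
Write `a = √(p+1)/(p+2)` and `b = √(2/(p+2))`, so that `λ_P + λ_Q - 1 = 1 - a - b` and
`2λ_Q - 1 = 1 - 2b`. The quantity is `X² + 2XY` with `X = 1 - a - b`, `Y = 1 - 2b`, which is
positive as soon as `X > 0` and `Y ≥ 0`. Both follow from `a < 1/2` (as `4(p+1) < (p+2)²` for
`p ≠ 0`) and `b ≤ 1/2` (as `2/(p+2) ≤ 1/4` for `p ≥ 6`).
-/

namespace Real

lemma sqrt_add_one_div_add_two_lt_half {p : ℝ} (hp : 0 < p) :
    √(p + 1) / (p + 2) < 1 / 2 := by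
  have hsq : √(p + 1) < (p + 2) / 2 := by
    rw [sqrt_lt' (by positivity)]
    nlinarith
  rw [div_lt_iff₀ (by positivity)]
  linarith

lemma sqrt_two_div_add_two_le_half {p : ℝ} (hp : 6 ≤ p) :
    √(2 / (p + 2)) ≤ 1 / 2 := by
  rw [sqrt_le_left (by norm_num), div_le_iff₀ (by positivity)]
  linarith

end Real

/-- For all real `p ≥ 6`, with `λ_P = 1 - √(p+1)/(p+2)` and `λ_Q = 1 - √(2/(p+2))`,
one has `(λ_P + λ_Q - 1)² + 2(λ_P + λ_Q - 1)(2 λ_Q - 1) > 0`. -/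
theorem second_spectral_condition (p : ℝ) (hp : 6 ≤ p) :
    ((1 - Real.sqrt (p + 1) / (p + 2)) + (1 - Real.sqrt (2 / (p + 2))) - 1) ^ 2 +
      2 * ((1 - Real.sqrt (p + 1) / (p + 2)) + (1 - Real.sqrt (2 / (p + 2))) - 1) *
        (2 * (1 - Real.sqrt (2 / (p + 2))) - 1) > 0 := by
  have ha := Real.sqrt_add_one_div_add_two_lt_half (by linarith : 0 < p)
  have hb := Real.sqrt_two_div_add_two_le_half hp
  set X := (1 - √(p + 1) / (p + 2)) + (1 - √(2 / (p + 2))) - 1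
  have hX : 0 < X := by linarith
  have hY : 0 ≤ 2 * (1 - √(2 / (p + 2))) - 1 := by linarith
  linarith [pow_pos hX 2, mul_nonneg hX.le hY]
end

section
/- A finite connected bipartite graph that is vertex-degree at least 2, has diameter 3 and girth 6 satisfies: the two parts of the bipartition, viewed as points and lines with incidence given by adjacency, form a projective plane, i.e., any two distinct points lie on a unique common line and any two distinct lines meet in a unique point. -/
/-! Two vertices on the same side of a bipartition are joined only by walks of even length, so
two distinct points (or lines) at distance at most 3 are at distance exactly 2 and thus have a
common neighbour. Two distinct common neighbours would close a 4-cycle, which girth 6 forbids. -/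

namespace SimpleGraph

variable {V : Type*} {G : SimpleGraph V} {s t : Set V} {u v : V}

def IsBipartiteWith.toColoring [DecidablePred (· ∈ s)] (h : G.IsBipartiteWith s t) :
    G.Coloring Bool :=
  Coloring.mk (fun x ↦ decide (x ∈ s)) fun {x y} hxy ↦ by
    rcases h.mem_of_adj hxy with ⟨hx, hy⟩ | ⟨hx, hy⟩
    · simp [hx, h.disjoint.notMem_of_mem_right hy]
    · simp [hy, h.disjoint.notMem_of_mem_right hx]

theorem IsBipartiteWith.even_length_iff (h : G.IsBipartiteWith s t) (p : G.Walk u v) :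
    Even p.length ↔ (u ∈ s ↔ v ∈ s) := by
  classical
  simpa [IsBipartiteWith.toColoring, Coloring.mk] using h.toColoring.even_length_iff_congr p

theorem IsBipartiteWith.edist_eq_two_of_edist_le_three (h : G.IsBipartiteWith s t)
    (hd : G.edist u v ≤ 3) (hu : u ∈ s) (hv : v ∈ s) (huv : u ≠ v) : G.edist u v = 2 := by
  obtain ⟨p, hp⟩ := exists_walk_of_edist_ne_top (hd.trans_lt (by decide)).ne
  have hle : p.length ≤ 3 := by exact_mod_cast hp ▸ hd
  have heven : Even p.length := (h.even_length_iff p).mpr (iff_of_true hu hv)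
  have hpos : p.length ≠ 0 := fun h0 ↦ huv (p.eq_of_length_eq_zero h0)
  obtain ⟨k, hk⟩ := heven
  rw [← hp]
  exact_mod_cast (by omega : p.length = 2)

theorem commonNeighbors_subsingleton (hg : 4 < G.egirth) (huv : u ≠ v) :
    (G.commonNeighbors u v).Subsingleton := by
  intro x hx y hy
  rw [mem_commonNeighbors] at hx hy
  by_contra hxy
  let c : G.Walk u u := .cons hx.1 (.cons hx.2.symm (.cons hy.2 (.cons hy.1.symm .nil)))
  have hc : c.IsCycle := by
    simp [c, Walk.cons_isCycle_iff, Walk.cons_isPath_iff, huv, huv.symm, hxy, hx.1.ne,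
      hy.1.ne, hy.2.ne, hx.1.ne.symm, hx.2.ne.symm, hy.1.ne.symm]
  have := (egirth_le_length hc).trans_lt' hg
  simp [c] at this

theorem IsBipartiteWith.existsUnique_common_neighbor (h : G.IsBipartiteWith s t)
    (hdiam : G.ediam ≤ 3) (hgirth : 4 < G.egirth) (hu : u ∈ s) (hv : v ∈ s) (huv : u ≠ v) :
    ∃! w, w ∈ t ∧ G.Adj u w ∧ G.Adj v w := by
  have hdist := h.edist_eq_two_of_edist_le_three (edist_le_ediam.trans hdiam) hu hv huv
  obtain ⟨-, -, w, hw⟩ := edist_eq_two_iff.mp hdist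
  exact ⟨w, ⟨h.mem_of_mem_adj hu hw.1, hw⟩,
    fun w' hw' ↦ commonNeighbors_subsingleton hgirth huv hw'.2 hw⟩

end SimpleGraph

open SimpleGraph in
theorem bipartite_diam_three_girth_six_projective_plane_general
    {V : Type*} (G : SimpleGraph V) (Pt L : Set V)
    (hdisj : Pt ∩ L = ∅)
    (hbip : ∀ u v : V, G.Adj u v → (u ∈ Pt ∧ v ∈ L) ∨ (u ∈ L ∧ v ∈ Pt))
    (hdiam : G.ediam = 3)
    (hgirth : G.egirth = 6) :
    (∀ p₁ p₂, p₁ ∈ Pt → p₂ ∈ Pt → p₁ ≠ p₂ →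
      ∃! ℓ, ℓ ∈ L ∧ G.Adj p₁ ℓ ∧ G.Adj p₂ ℓ) ∧
    (∀ ℓ₁ ℓ₂, ℓ₁ ∈ L → ℓ₂ ∈ L → ℓ₁ ≠ ℓ₂ →
      ∃! p, p ∈ Pt ∧ G.Adj ℓ₁ p ∧ G.Adj ℓ₂ p) := by
  have hG : G.IsBipartiteWith Pt L := ⟨Set.disjoint_iff_inter_eq_empty.mpr hdisj, hbip⟩
  have hgirth' : 4 < G.egirth := by rw [hgirth]; decide
  exact ⟨fun _ _ ↦ hG.existsUnique_common_neighbor hdiam.le hgirth',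
    fun _ _ ↦ hG.symm.existsUnique_common_neighbor hdiam.le hgirth'⟩

/-- A finite connected bipartite graph with parts `Pt` (points) and `L` (lines), all
vertex degrees at least 2, diameter 3 and girth 6, is the incidence graph of a
projective plane: any two distinct points lie on a unique common line and any two
distinct lines meet in a unique point. -/
theorem bipartite_diam_three_girth_six_projective_plane
    {V : Type*} [Fintype V] (G : SimpleGraph V) (Pt L : Set V)
    (hdisj : Pt ∩ L = ∅) (hcover : Pt ∪ L = Set.univ)
    (hbip : ∀ u v : V, G.Adj u v → (u ∈ Pt ∧ v ∈ L) ∨ (u ∈ L ∧ v ∈ Pt))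
    (hconn : G.Connected)
    (hdeg : ∀ v : V, 2 ≤ Nat.card (G.neighborSet v))
    (hdiam : G.ediam = 3)
    (hgirth : G.egirth = 6) :
    (∀ p₁ p₂, p₁ ∈ Pt → p₂ ∈ Pt → p₁ ≠ p₂ →
      ∃! ℓ, ℓ ∈ L ∧ G.Adj p₁ ℓ ∧ G.Adj p₂ ℓ) ∧
    (∀ ℓ₁ ℓ₂, ℓ₁ ∈ L → ℓ₂ ∈ L → ℓ₁ ≠ ℓ₂ →
      ∃! p, p ∈ Pt ∧ G.Adj ℓ₁ p ∧ G.Adj ℓ₂ p) :=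
  bipartite_diam_three_girth_six_projective_plane_general G Pt L hdisj hbip hdiam hgirth
end

section
/- Let G be a finite group, {P_i : i ∈ I} subgroups with |I| = s + 1 and |P_i| = t + 1 for all i, satisfying P_iP_j ∩ P_k = {1} for pairwise distinct i, j, k and P_i ∩ P_j = {1} for distinct i, j. If |G| = (1+t)(1+st), then the coset graph of G with respect to {P_i} is a bipartite graph in which every vertex of the G-side has degree s+1 and every coset vertex has degree t+1, with girth at least 8 and diameter at most 4. -/
/-!
The coset graph is bipartite with the stated degrees for elementary reasons. A 4-cycle would put
two distinct elements into two distinct cosets, producing a nontrivial element of some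
`P i ⊓ P j`; a 6-cycle `g₁ ∈ c₁ ∋ g₂ ∈ c₂ ∋ g₃ ∈ c₃ ∋ g₁` would put `g₁⁻¹ g₃ ≠ 1` into
`P i P j ∩ P k`. For the diameter, the two intersection conditions make `(p, q) ↦ p q` injective
on `P i × ({1} ∪ ⋃_{j ≠ i} (P j \ {1}))`, and the order of `G` makes it bijective. Hence
`G = P i ⋃_j P j`, so every group element is three steps away from any coset of `P i`.
-/

open scoped Pointwise

section

open SimpleGraph Sum

lemma SimpleGraph.eight_le_egirth {V : Type*} {G : SimpleGraph V} (hG : G.Colorable 2)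
    (h4 : (cycleGraph 4).Free G) (h6 : (cycleGraph 6).Free G) : 8 ≤ G.egirth := by
  refine le_egirth.mpr fun a w hw => ?_
  obtain ⟨k, hk⟩ := two_colorable_iff_forall_loop_even.mp hG a w
  have h4 : w.length ≠ 4 := fun h =>
    h4 <| (cycleGraph_isContained_iff (by norm_num)).mpr ⟨a, w, hw, h⟩
  have h6 : w.length ≠ 6 := fun h =>
    h6 <| (cycleGraph_isContained_iff (by norm_num)).mpr ⟨a, w, hw, h⟩
  have := hw.three_le_length
  exact_mod_cast (by omega : 8 ≤ w.length)

variable {G : Type*} [Group G] {I : Type*} {P : I → Subgroup G}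

@[simp]
lemma cosetGraph_adj_inl_inr {g : G} {c : Σ i, G ⧸ P i} :
    (cosetGraph P).Adj (inl g) (inr c) ↔ (g : G ⧸ P c.1) = c.2 := by
  obtain ⟨i, x⟩ := c
  simp [cosetGraph, eq_comm]

@[simp]
lemma cosetGraph_adj_inr_inl {g : G} {c : Σ i, G ⧸ P i} :
    (cosetGraph P).Adj (inr c) (inl g) ↔ (g : G ⧸ P c.1) = c.2 := by
  rw [adj_comm, cosetGraph_adj_inl_inr]

lemma cosetGraph_le_completeBipartiteGraph :
    cosetGraph P ≤ completeBipartiteGraph G (Σ i, G ⧸ P i) := by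
  rintro _ _ ⟨-, ⟨g, i, rfl, rfl⟩ | ⟨g, i, rfl, rfl⟩⟩ <;> simp

lemma cosetGraph_colorable_two : (cosetGraph P).Colorable 2 := by
  simpa using (CompleteBipartiteGraph.bicoloring _ _).colorable.mono_left
    cosetGraph_le_completeBipartiteGraph

lemma exists_eq_inr_of_cosetGraph_adj {g : G} {v} (h : (cosetGraph P).Adj (inl g) v) :
    ∃ c : Σ i, G ⧸ P i, v = inr c ∧ (g : G ⧸ P c.1) = c.2 := by
  rcases v with g' | c
  · simpa using cosetGraph_le_completeBipartiteGraph h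
  · exact ⟨c, rfl, cosetGraph_adj_inl_inr.mp h⟩

lemma exists_eq_inl_of_cosetGraph_adj {c : Σ i, G ⧸ P i} {v} (h : (cosetGraph P).Adj (inr c) v) :
    ∃ g : G, v = inl g ∧ (g : G ⧸ P c.1) = c.2 := by
  rcases v with g | c'
  · exact ⟨g, rfl, cosetGraph_adj_inr_inl.mp h⟩
  · simpa using cosetGraph_le_completeBipartiteGraph h

lemma cosetGraph_neighborSet_inl (g : G) :
    (cosetGraph P).neighborSet (inl g) = Set.range fun i => inr ⟨i, (g : G ⧸ P i)⟩ := by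
  ext (g' | ⟨i, x⟩)
  · simpa using fun h => by simpa using cosetGraph_le_completeBipartiteGraph h
  · simp [eq_comm]

lemma cosetGraph_neighborSet_inr (c : Σ i, G ⧸ P i) :
    (cosetGraph P).neighborSet (inr c) = inl '' ((↑) ⁻¹' {c.2}) := by
  ext (g | c')
  · simp
  · simpa using fun h => by simpa using cosetGraph_le_completeBipartiteGraph h

lemma card_cosetGraph_neighborSet_inl (g : G) :
    Nat.card ((cosetGraph P).neighborSet (inl g)) = Nat.card I := by
  rw [cosetGraph_neighborSet_inl,
    Nat.card_range_of_injective fun i j h => congrArg Sigma.fst (inr_injective h)]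

lemma card_cosetGraph_neighborSet_inr (c : Σ i, G ⧸ P i) :
    Nat.card ((cosetGraph P).neighborSet (inr c)) = Nat.card (P c.1) := by
  rw [cosetGraph_neighborSet_inr, Nat.card_image_of_injective inl_injective,
    Nat.card_congr (QuotientGroup.preimageMkEquivSubgroupProdSet _ _)]
  simp

lemma sigma_eq_of_mk_eq_of_fst_eq {g : G} {c₁ c₂ : Σ i, G ⧸ P i}
    (h₁ : (g : G ⧸ P c₁.1) = c₁.2) (h₂ : (g : G ⧸ P c₂.1) = c₂.2) (h : c₁.1 = c₂.1) :
    c₁ = c₂ := by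
  obtain ⟨i, x⟩ := c₁
  obtain ⟨j, y⟩ := c₂
  dsimp only at h₁ h₂ h
  subst h h₁ h₂
  rfl

lemma eq_or_eq_of_mk_eq (h2 : ∀ i j : I, i ≠ j → P i ⊓ P j = ⊥)
    {g₁ g₂ : G} {c₁ c₂ : Σ i, G ⧸ P i}
    (h₁₁ : (g₁ : G ⧸ P c₁.1) = c₁.2) (h₂₁ : (g₂ : G ⧸ P c₁.1) = c₁.2)
    (h₁₂ : (g₁ : G ⧸ P c₂.1) = c₂.2) (h₂₂ : (g₂ : G ⧸ P c₂.1) = c₂.2) :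
    g₁ = g₂ ∨ c₁ = c₂ := by
  by_cases h : c₁.1 = c₂.1
  · exact .inr (sigma_eq_of_mk_eq_of_fst_eq h₁₁ h₁₂ h)
  · have hmem : g₁⁻¹ * g₂ ∈ P c₁.1 ⊓ P c₂.1 :=
      ⟨QuotientGroup.eq.mp (h₁₁.trans h₂₁.symm), QuotientGroup.eq.mp (h₁₂.trans h₂₂.symm)⟩
    rw [h2 _ _ h, Subgroup.mem_bot, inv_mul_eq_one] at hmem
    exact .inl hmem

lemma cosetGraph_commonNeighbors_subsingleton (h2 : ∀ i j : I, i ≠ j → P i ⊓ P j = ⊥)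
    {u v : G ⊕ (Σ i, G ⧸ P i)} (huv : u ≠ v) :
    ((cosetGraph P).commonNeighbors u v).Subsingleton := by
  rintro x ⟨hux, hvx⟩ y ⟨huy, hvy⟩
  rcases u with g₁ | c₁
  · obtain ⟨c, rfl, h₁₁⟩ := exists_eq_inr_of_cosetGraph_adj hux
    obtain ⟨c', rfl, h₁₂⟩ := exists_eq_inr_of_cosetGraph_adj huy
    obtain ⟨g₂, rfl, h₂₁⟩ := exists_eq_inl_of_cosetGraph_adj hvx.symm
    have h₂₂ := cosetGraph_adj_inl_inr.mp hvy
    exact congrArg inr ((eq_or_eq_of_mk_eq h2 h₁₁ h₂₁ h₁₂ h₂₂).resolve_left (huv ∘ congrArg inl))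
  · obtain ⟨g, rfl, h₁₁⟩ := exists_eq_inl_of_cosetGraph_adj hux
    obtain ⟨g', rfl, h₂₁⟩ := exists_eq_inl_of_cosetGraph_adj huy
    obtain ⟨c₂, rfl, h₁₂⟩ := exists_eq_inr_of_cosetGraph_adj hvx.symm
    have h₂₂ := cosetGraph_adj_inr_inl.mp hvy
    exact congrArg inl ((eq_or_eq_of_mk_eq h2 h₁₁ h₂₁ h₁₂ h₂₂).resolve_right (huv ∘ congrArg inr))

lemma cosetGraph_free_cycleGraph_four (h2 : ∀ i j : I, i ≠ j → P i ⊓ P j = ⊥) :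
    (cycleGraph 4).Free (cosetGraph P) := by
  rintro ⟨f⟩
  have hadj (k : Fin 4) : (cosetGraph P).Adj (f k) (f (k + 1)) :=
    f.toHom.map_adj (by simp [cycleGraph_adj])
  exact f.injective.ne (by decide : (1 : Fin 4) ≠ 3) <|
    cosetGraph_commonNeighbors_subsingleton h2 (f.injective.ne (by decide : (0 : Fin 4) ≠ 2))
      ⟨hadj 0, (hadj 1).symm⟩ ⟨(hadj 3).symm, hadj 2⟩

lemma eq_of_mk_eq_of_ne (h3 : ∀ i j k : I, i ≠ j → j ≠ k → i ≠ k →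
      ∀ g : G, g ∈ (P i : Set G) * (P j : Set G) → g ∈ P k → g = 1)
    {g₁ g₂ g₃ : G} {c₁ c₂ c₃ : Σ i, G ⧸ P i} (h₁₂ : c₁ ≠ c₂) (h₂₃ : c₂ ≠ c₃) (h₁₃ : c₁ ≠ c₃)
    (e₁₁ : (g₁ : G ⧸ P c₁.1) = c₁.2) (e₂₁ : (g₂ : G ⧸ P c₁.1) = c₁.2)
    (e₂₂ : (g₂ : G ⧸ P c₂.1) = c₂.2) (e₃₂ : (g₃ : G ⧸ P c₂.1) = c₂.2)
    (e₃₃ : (g₃ : G ⧸ P c₃.1) = c₃.2) (e₁₃ : (g₁ : G ⧸ P c₃.1) = c₃.2) : g₁ = g₃ := by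
  have hmul : g₁⁻¹ * g₃ ∈ (P c₁.1 : Set G) * (P c₂.1 : Set G) :=
    ⟨_, QuotientGroup.eq.mp (e₁₁.trans e₂₁.symm), _, QuotientGroup.eq.mp (e₂₂.trans e₃₂.symm),
      by group⟩
  rw [← inv_mul_eq_one]
  exact h3 _ _ _ (h₁₂ ∘ sigma_eq_of_mk_eq_of_fst_eq e₂₁ e₂₂)
    (h₂₃ ∘ sigma_eq_of_mk_eq_of_fst_eq e₃₂ e₃₃) (h₁₃ ∘ sigma_eq_of_mk_eq_of_fst_eq e₁₁ e₁₃) _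
    hmul (QuotientGroup.eq.mp (e₁₃.trans e₃₃.symm))

lemma cosetGraph_not_hexagon_of_eq_inl (h3 : ∀ i j k : I, i ≠ j → j ≠ k → i ≠ k →
      ∀ g : G, g ∈ (P i : Set G) * (P j : Set G) → g ∈ P k → g = 1)
    {v : Fin 6 → G ⊕ (Σ i, G ⧸ P i)} (hv : Function.Injective v)
    (hadj : ∀ k, (cosetGraph P).Adj (v k) (v (k + 1))) {g₁ : G} (hg₁ : v 0 = inl g₁) : False := by
  obtain ⟨c₁, hc₁, e₁₁⟩ := exists_eq_inr_of_cosetGraph_adj (hg₁ ▸ hadj 0)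
  obtain ⟨g₂, hg₂, e₂₁⟩ := exists_eq_inl_of_cosetGraph_adj (hc₁ ▸ hadj 1)
  obtain ⟨c₂, hc₂, e₂₂⟩ := exists_eq_inr_of_cosetGraph_adj (hg₂ ▸ hadj 2)
  obtain ⟨g₃, hg₃, e₃₂⟩ := exists_eq_inl_of_cosetGraph_adj (hc₂ ▸ hadj 3)
  obtain ⟨c₃, hc₃, e₃₃⟩ := exists_eq_inr_of_cosetGraph_adj (hg₃ ▸ hadj 4)
  have e₁₃ : (g₁ : G ⧸ P c₃.1) = c₃.2 := cosetGraph_adj_inr_inl.mp (hc₃ ▸ hg₁ ▸ hadj 5)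
  have hne {a b : Fin 6} (h : a ≠ b) {x y} (hx : v a = x) (hy : v b = y) : x ≠ y :=
    hx ▸ hy ▸ hv.ne h
  exact hne (by decide : (0 : Fin 6) ≠ 4) hg₁ hg₃ <| congrArg inl <| eq_of_mk_eq_of_ne h3
    (hne (by decide) hc₁ hc₂ <| congrArg inr ·) (hne (by decide) hc₂ hc₃ <| congrArg inr ·)
    (hne (by decide) hc₁ hc₃ <| congrArg inr ·) e₁₁ e₂₁ e₂₂ e₃₂ e₃₃ e₁₃

lemma cosetGraph_free_cycleGraph_six (h3 : ∀ i j k : I, i ≠ j → j ≠ k → i ≠ k →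
      ∀ g : G, g ∈ (P i : Set G) * (P j : Set G) → g ∈ P k → g = 1) :
    (cycleGraph 6).Free (cosetGraph P) := by
  rintro ⟨f⟩
  have hadj (k : Fin 6) : (cosetGraph P).Adj (f k) (f (k + 1)) :=
    f.toHom.map_adj (by simp [cycleGraph_adj])
  rcases h : f 0 with g | c
  · exact cosetGraph_not_hexagon_of_eq_inl h3 f.injective hadj h
  · obtain ⟨g, hg, -⟩ := exists_eq_inl_of_cosetGraph_adj (h ▸ hadj 0)
    exact cosetGraph_not_hexagon_of_eq_inl h3 (v := fun k => f (k + 1))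
      (f.injective.comp (add_left_injective 1)) (fun k => hadj (k + 1)) hg

section Transversal

variable (P) in
/-- Indexes the right transversal `{1} ∪ ⋃_{j ≠ i} (P j \ {1})` of `P i`. -/
abbrev TransversalIndex (i : I) := Option (Σ j : {j // j ≠ i}, {q : P j // q ≠ 1})

def TransversalIndex.val {i : I} : TransversalIndex P i → G
  | none => 1
  | some q => q.2.1

lemma card_transversalIndex [Finite G] [Finite I] {s t : ℕ} (hI : Nat.card I = s + 1)
    (hP : ∀ i, Nat.card (P i) = t + 1) (i : I) :
    Nat.card (TransversalIndex P i) = 1 + s * t := by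
  classical
  have := Fintype.ofFinite I
  have hJ : Nat.card {j // j ≠ i} = s := by
    have := Nat.card_congr (Equiv.optionSubtypeNe i)
    rw [Finite.card_option, hI] at this
    omega
  have hQ (j : I) : Nat.card {q : P j // q ≠ 1} = t := by
    have := Nat.card_congr (Equiv.optionSubtypeNe (1 : P j))
    rw [Finite.card_option, hP] at this
    omega
  rw [Finite.card_option, Nat.card_sigma]
  simp only [hQ, Finset.sum_const, Finset.card_univ, smul_eq_mul, ← Nat.card_eq_fintype_card, hJ]
  ring

lemma eq_of_mul_inv_mem_of_ne (h2 : ∀ i j : I, i ≠ j → P i ⊓ P j = ⊥)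
    (h3 : ∀ i j k : I, i ≠ j → j ≠ k → i ≠ k →
      ∀ g : G, g ∈ (P i : Set G) * (P j : Set G) → g ∈ P k → g = 1)
    {i j j' : I} (hj : j ≠ i) (hj' : j' ≠ i) {q q' : G} (hq : q ∈ P j) (hq' : q' ∈ P j')
    (h : q' * q⁻¹ ∈ P i) : q' = q := by
  rw [← mul_inv_eq_one]
  rcases eq_or_ne j' j with rfl | hjj
  · have hmem : q' * q⁻¹ ∈ P i ⊓ P j' := ⟨h, (P j').mul_mem hq' ((P j').inv_mem hq)⟩
    rwa [h2 _ _ hj'.symm, Subgroup.mem_bot] at hmem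
  · exact h3 _ _ _ hjj hj hj' _ (Set.mul_mem_mul hq' (inv_mem hq)) h

lemma TransversalIndex.val_injective (h2 : ∀ i j : I, i ≠ j → P i ⊓ P j = ⊥) {i : I} :
    Function.Injective (TransversalIndex.val : TransversalIndex P i → G) := by
  intro d d'
  rcases d with _ | ⟨⟨j, -⟩, q, hq⟩ <;> rcases d' with _ | ⟨⟨j', -⟩, q', hq'⟩ <;> intro h
  · rfl
  · exact absurd (OneMemClass.coe_eq_one.mp h.symm) hq'
  · exact absurd (OneMemClass.coe_eq_one.mp h) hq
  · change (q : G) = q' at h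
    obtain rfl : j = j' := by
      by_contra hjj
      have hmem : (q : G) ∈ P j ⊓ P j' := ⟨q.2, h ▸ q'.2⟩
      rw [h2 _ _ hjj, Subgroup.mem_bot, OneMemClass.coe_eq_one] at hmem
      exact hq hmem
    obtain rfl : q = q' := Subtype.ext h
    rfl

lemma TransversalIndex.val_eq_of_mul_inv_mem (h2 : ∀ i j : I, i ≠ j → P i ⊓ P j = ⊥)
    (h3 : ∀ i j k : I, i ≠ j → j ≠ k → i ≠ k →
      ∀ g : G, g ∈ (P i : Set G) * (P j : Set G) → g ∈ P k → g = 1)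
    {i : I} {d d' : TransversalIndex P i} (h : d'.val * d.val⁻¹ ∈ P i) : d'.val = d.val := by
  revert h
  rcases d with _ | ⟨⟨j, hj⟩, q, -⟩ <;> rcases d' with _ | ⟨⟨j', hj'⟩, q', -⟩ <;> intro h
  · rfl
  · exact eq_of_mul_inv_mem_of_ne h2 h3 hj' hj' (one_mem _) q'.2 h
  · exact eq_of_mul_inv_mem_of_ne h2 h3 hj hj q.2 (one_mem _) h
  · exact eq_of_mul_inv_mem_of_ne h2 h3 hj hj' q.2 q'.2 h

lemma bijective_mul_transversalIndex_val [Finite G] [Finite I] {s t : ℕ}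
    (hI : Nat.card I = s + 1) (hP : ∀ i, Nat.card (P i) = t + 1)
    (h2 : ∀ i j : I, i ≠ j → P i ⊓ P j = ⊥)
    (h3 : ∀ i j k : I, i ≠ j → j ≠ k → i ≠ k →
      ∀ g : G, g ∈ (P i : Set G) * (P j : Set G) → g ∈ P k → g = 1)
    (hG : Nat.card G = (1 + t) * (1 + s * t)) (i : I) :
    Function.Bijective fun x : P i × TransversalIndex P i => (x.1 : G) * x.2.val := by
  refine (Nat.bijective_iff_injective_and_card _).mpr ⟨?_, ?_⟩
  · rintro ⟨p, d⟩ ⟨p', d'⟩ h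
    dsimp only at h
    have hval : d'.val = d.val := TransversalIndex.val_eq_of_mul_inv_mem h2 h3 <| by
      rw [mul_inv_eq_iff_eq_mul.mpr (by rw [mul_assoc, h, inv_mul_cancel_left])]
      exact (P i).mul_mem ((P i).inv_mem p'.2) p.2
    obtain rfl := TransversalIndex.val_injective h2 hval
    obtain rfl : p = p' := Subtype.ext (mul_right_cancel h)
    rfl
  · rw [Nat.card_prod, card_transversalIndex hI hP, hP, hG, add_comm t]

lemma mul_iUnion_eq_univ [Finite G] [Finite I] {s t : ℕ}
    (hI : Nat.card I = s + 1) (hP : ∀ i, Nat.card (P i) = t + 1)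
    (h2 : ∀ i j : I, i ≠ j → P i ⊓ P j = ⊥)
    (h3 : ∀ i j k : I, i ≠ j → j ≠ k → i ≠ k →
      ∀ g : G, g ∈ (P i : Set G) * (P j : Set G) → g ∈ P k → g = 1)
    (hG : Nat.card G = (1 + t) * (1 + s * t)) (i : I) :
    (P i : Set G) * ⋃ j, (P j : Set G) = Set.univ := by
  refine Set.eq_univ_of_forall fun g => ?_
  obtain ⟨⟨p, d⟩, rfl⟩ := (bijective_mul_transversalIndex_val hI hP h2 h3 hG i).2 g
  refine Set.mul_mem_mul p.2 (Set.mem_iUnion.mpr ?_)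
  rcases d with _ | ⟨⟨j, -⟩, q, -⟩
  · exact ⟨i, one_mem _⟩
  · exact ⟨j, q.2⟩

end Transversal

lemma cosetGraph_edist_inr_inl_le_three
    (hmul : ∀ i, (P i : Set G) * ⋃ j, (P j : Set G) = Set.univ) (c : Σ i, G ⧸ P i) (g : G) :
    (cosetGraph P).edist (inr c) (inl g) ≤ 3 := by
  obtain ⟨i, x⟩ := c
  obtain ⟨h, rfl⟩ := QuotientGroup.mk_surjective x
  obtain ⟨p, hp, q, hq, hpq⟩ := Set.mem_mul.mp (hmul i ▸ Set.mem_univ (h⁻¹ * g))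
  obtain ⟨j, hq⟩ := Set.mem_iUnion.mp hq
  have e₁ : (cosetGraph P).Adj (inr ⟨i, h⟩) (inl (h * p)) := by
    simpa using QuotientGroup.mk_mul_of_mem h hp
  have e₂ : (cosetGraph P).Adj (inl (h * p)) (inr ⟨j, ((h * p : G) : G ⧸ P j)⟩) := by simp
  have e₃ : (cosetGraph P).Adj (inr ⟨j, ((h * p : G) : G ⧸ P j)⟩) (inl g) := by
    simpa [show g = h * p * q by rw [mul_assoc, hpq, mul_inv_cancel_left]] using
      QuotientGroup.mk_mul_of_mem (h * p) hq
  simpa using edist_le (.cons e₁ (.cons e₂ (.cons e₃ .nil)))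

lemma cosetGraph_edist_le_four [Nonempty I]
    (hmul : ∀ i, (P i : Set G) * ⋃ j, (P j : Set G) = Set.univ) (u v : G ⊕ (Σ i, G ⧸ P i)) :
    (cosetGraph P).edist u v ≤ 4 := by
  have hadj (g : G) (c : Σ i, G ⧸ P i) (hg : (g : G ⧸ P c.1) = c.2) :
      (cosetGraph P).edist (inl g) (inr c) ≤ 1 := (edist_eq_one_iff_adj.mpr (by simpa using hg)).le
  rcases u with g | c <;> rcases v with g' | c'
  · obtain ⟨i⟩ := ‹Nonempty I›
    calc (cosetGraph P).edist (inl g) (inl g')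
        ≤ (cosetGraph P).edist (inl g) (inr ⟨i, g⟩) + (cosetGraph P).edist (inr ⟨i, g⟩) (inl g') :=
          SimpleGraph.edist_triangle
      _ ≤ 1 + 3 := add_le_add (hadj _ _ rfl) (cosetGraph_edist_inr_inl_le_three hmul _ _)
      _ = 4 := by norm_num
  · rw [SimpleGraph.edist_comm]
    exact (cosetGraph_edist_inr_inl_le_three hmul c' g).trans (by norm_num)
  · exact (cosetGraph_edist_inr_inl_le_three hmul c g').trans (by norm_num)
  · obtain ⟨g', hg'⟩ := QuotientGroup.mk_surjective c'.2
    calc (cosetGraph P).edist (inr c) (inr c')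
        ≤ (cosetGraph P).edist (inr c) (inl g') + (cosetGraph P).edist (inl g') (inr c') :=
          SimpleGraph.edist_triangle
      _ ≤ 3 + 1 := add_le_add (cosetGraph_edist_inr_inl_le_three hmul _ _) (hadj _ _ hg')
      _ = 4 := by norm_num

end

/-- Kantor's criterion: if `G` is a finite group with `|G| = (1+t)(1+st)` and
`{Pᵢ : i ∈ I}` are `s+1` subgroups of order `t+1` with `Pᵢ ∩ Pⱼ = {1}` for distinct
`i, j` and `Pᵢ Pⱼ ∩ P_k = {1}` for pairwise distinct `i, j, k`, then the coset graph is
bipartite, every group-element vertex has degree `s+1`, every coset vertex has degree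
`t+1`, the girth is at least 8 and the diameter is at most 4. -/
theorem cosetGraph_generalized_quadrangle {G : Type*} [Group G] [Finite G]
    {I : Type*} [Finite I] (P : I → Subgroup G) (s t : ℕ)
    (hI : Nat.card I = s + 1) (hP : ∀ i, Nat.card (P i) = t + 1)
    (h2 : ∀ i j : I, i ≠ j → P i ⊓ P j = ⊥)
    (h3 : ∀ i j k : I, i ≠ j → j ≠ k → i ≠ k →
      ∀ g : G, g ∈ (P i : Set G) * (P j : Set G) → g ∈ P k → g = 1)
    (hG : Nat.card G = (1 + t) * (1 + s * t)) :
    (cosetGraph P).Colorable 2 ∧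
    (∀ g : G, Nat.card ((cosetGraph P).neighborSet (Sum.inl g)) = s + 1) ∧
    (∀ c : Σ i : I, G ⧸ P i,
      Nat.card ((cosetGraph P).neighborSet (Sum.inr c)) = t + 1) ∧
    8 ≤ (cosetGraph P).egirth ∧
    (∀ u v, (cosetGraph P).edist u v ≤ 4) := by
  have : Nonempty I := (Nat.card_pos_iff.mp (hI ▸ s.succ_pos)).1
  refine ⟨cosetGraph_colorable_two, fun g => ?_, fun c => ?_, ?_,
    cosetGraph_edist_le_four (mul_iUnion_eq_univ hI hP h2 h3 hG)⟩
  · rw [card_cosetGraph_neighborSet_inl, hI]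
  · rw [card_cosetGraph_neighborSet_inr, hP]
  · exact SimpleGraph.eight_le_egirth cosetGraph_colorable_two (cosetGraph_free_cycleGraph_four h2)
      (cosetGraph_free_cycleGraph_six h3)
end
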